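/- If n is a positive integer such that a wallpaper group (a discrete group of isometries of the Euclidean plane containing two linearly independent translations) contains a rotation of order n, then n ∈ {1, 2, 3, 4, 6}. Equivalently: if cos(2π/n) = k/2 for some integer k, then n ∈ {1, 2, 3, 4, 6}. -/
import Mathlib


open Real

lemma cr_aux (n : ℕ) (hn : 2 ≤ n) (m : ℕ) (hm : 0 < m)
    (h : Real.cos (2 * Real.pi / n) = Real.cos (2 * Real.pi / m)) (hm2 : 2 ≤ m) :
    n = m := by
  have hpi := Real.pi_pos
  have hn0 : (0:ℝ) < n := by positivity
  have hm0 : (0:ℝ) < m := by positivity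
  have hmem : ∀ j : ℕ, 2 ≤ j → 2 * Real.pi / j ∈ Set.Icc 0 Real.pi := by
    intro j hj
    have hj0 : (0:ℝ) < j := by positivity
    constructor
    · positivity
    · rw [div_le_iff₀ hj0]
      have hj' : (2:ℝ) ≤ j := by exact_mod_cast hj
      nlinarith [mul_le_mul_of_nonneg_left hj' hpi.le]
  have := Real.injOn_cos (hmem n hn) (hmem m hm2) h
  field_simp at this
  exact_mod_cast this.symm

/-- Crystallographic restriction: if `2 * cos (2π/n)` is an integer for a positive
integer `n`, then `n = 1, 2, 3, 4`, or `6`. -/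
theorem crystallographic_restriction (n : ℕ) (hn : 0 < n)
    (h : ∃ k : ℤ, 2 * Real.cos (2 * Real.pi / n) = (k : ℝ)) :
    n = 1 ∨ n = 2 ∨ n = 3 ∨ n = 4 ∨ n = 6 := by
  obtain ⟨k, hk⟩ := h
  rcases Nat.lt_or_ge n 2 with h1 | h2
  · left; omega
  have hpi := Real.pi_pos
  have hn0 : (0:ℝ) < n := by positivity
  have hb1 := Real.neg_one_le_cos (2 * Real.pi / n)
  have hb2 := Real.cos_le_one (2 * Real.pi / n)
  have hk1 : (-2 : ℤ) ≤ k := by exact_mod_cast (by nlinarith : (-2:ℝ) ≤ (k:ℝ))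
  have hk2 : k ≤ 2 := by exact_mod_cast (by nlinarith : (k:ℝ) ≤ 2)
  interval_cases k
  · -- cos = -1, θ = π, n = 2
    right; left
    apply cr_aux n h2 2 (by norm_num) _ (by norm_num)
    have : (2 * Real.pi / (2:ℕ)) = Real.pi := by push_cast; ring
    rw [this, Real.cos_pi]; push_cast at hk; linarith
  · -- cos = -1/2, n = 3
    right; right; left
    apply cr_aux n h2 3 (by norm_num) _ (by norm_num)
    have : (2 * Real.pi / (3:ℕ)) = Real.pi - Real.pi/3 := by push_cast; ring
    rw [this, Real.cos_pi_sub, Real.cos_pi_div_three]; push_cast at hk; linarith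
  · -- cos = 0, n = 4
    right; right; right; left
    apply cr_aux n h2 4 (by norm_num) _ (by norm_num)
    have : (2 * Real.pi / (4:ℕ)) = Real.pi/2 := by push_cast; ring
    rw [this, Real.cos_pi_div_two]; push_cast at hk; linarith
  · -- cos = 1/2, n = 6
    right; right; right; right
    apply cr_aux n h2 6 (by norm_num) _ (by norm_num)
    have : (2 * Real.pi / (6:ℕ)) = Real.pi/3 := by push_cast; ring
    rw [this, Real.cos_pi_div_three]; push_cast at hk; linarith
  · -- cos = 1, θ = 0 impossible since 0 < θ ≤ π and cos injective... θ=0 needed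
    exfalso
    have hcos : Real.cos (2 * Real.pi / n) = 1 := by push_cast at hk; linarith
    have hmem : 2 * Real.pi / n ∈ Set.Icc (0:ℝ) Real.pi := by
      constructor
      · positivity
      · rw [div_le_iff₀ hn0]
        have h2' : (2:ℝ) ≤ n := by exact_mod_cast h2
        nlinarith [mul_le_mul_of_nonneg_left h2' hpi.le]
    have h0 : Real.cos (0:ℝ) = 1 := Real.cos_zero
    have := Real.injOn_cos hmem (by constructor <;> [rfl; linarith] : (0:ℝ) ∈ Set.Icc 0 Real.pi) (by rw [hcos, h0])
    have hz : 2 * Real.pi / n = 0 := this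
    rw [div_eq_zero_iff] at hz
    rcases hz with hz | hz
    · linarith
    · exact absurd hz (by positivity)
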